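/- The coefficient pairs arising from node binomials along a fixed chain of regular/critical choices generate exactly the pairs of adjacent entries of the twig multiplicity sequence: for each k, the multiset of pairs {(α, α+β)} over all 2^k strings of length k coincides with the multiset of adjacent pairs (m_k(i), m_k(i+1)) or (m_k(i+1), m_k(i)) in the twig multiplicity sequence m_k, one pair per node. -/

import Mathlib

/-!
Appending a letter to a string whose coefficient pair is `(α, β)` gives the pair
`(α, α + β)` or `(α + β, α)`, according to whether the letter repeats the previous one. Either
way the two extensions of the string carry the unordered pairs `{α, 2α + β}` and
`{α + β, 2α + β}`: these are exactly the two adjacent pairs that inserting the sum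
`α + (α + β)` between adjacent entries `α`, `α + β` of the twig sequence creates. So both
multisets of pairs evolve by `{x, y} ↦ {{x, x + y}, {y, x + y}}` from the common start `{1, 1}`.
-/

/-- Insert between each pair of adjacent terms of a list their sum. -/
def insertSums : List ℕ → List ℕ
  | [] => []
  | [a] => [a]
  | a :: b :: l => a :: (a + b) :: insertSums (b :: l)

/-- The twig multiplicity sequence. -/
def twigSeq : ℕ → List ℕ
  | 0 => [1, 1]
  | k + 1 => insertSums (twigSeq k)

/-- Auxiliary recursion for the node-binomial coefficient pair. -/
def coeffAux : Bool → ℕ × ℕ → List Bool → ℕ × ℕ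
  | _, ab, [] => ab
  | prev, (a, b), p :: rest =>
      if p = prev then coeffAux p (a, a + b) rest else coeffAux p (a + b, a) rest

/-- The coefficient pair `(α_k, β_k)` associated to a string over `{1,2}`. -/
def coeffPair : List Bool → ℕ × ℕ
  | [] => (1, 0)
  | p :: rest => coeffAux p (1, 1) rest

namespace Finset

theorem univ_val_map_eq_sum {ι β : Type*} [Fintype ι] (F : ι → β) :
    (univ : Finset ι).val.map F = ∑ i, {F i} := by
  rw [sum_eq_multiset_sum, ← Multiset.sum_map_singleton (univ.val.map F), Multiset.map_map]
  rfl

theorem univ_val_map_pi_fin_succ {α β : Type*} [Fintype α] {n : ℕ}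
    (F : (Fin (n + 1) → α) → β) :
    (univ : Finset (Fin (n + 1) → α)).val.map F =
      (univ : Finset (Fin n → α)).val.bind
        fun g => (univ : Finset α).val.map fun a => F (Fin.snoc g a) := by
  rw [univ_val_map_eq_sum, ← (Fin.snocEquiv fun _ => α).sum_comp, Fintype.sum_prod_type_right,
    Multiset.bind, Multiset.join, ← sum_eq_multiset_sum]
  simp only [univ_val_map_eq_sum]
  rfl

end Finset

theorem List.ofFn_snoc {α : Type*} {n : ℕ} (g : Fin n → α) (a : α) :
    List.ofFn (Fin.snoc g a : Fin (n + 1) → α) = List.ofFn g ++ [a] := by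
  rw [List.ofFn_succ']
  simp

def nodePair (l : List Bool) : Multiset ℕ :=
  {(coeffPair l).1, (coeffPair l).1 + (coeffPair l).2}

def childPairs (m : Multiset ℕ) : Multiset (Multiset ℕ) :=
  m.map fun z => {z, m.sum}

def coeffStep (continues : Bool) (ab : ℕ × ℕ) : ℕ × ℕ :=
  if continues then (ab.1, ab.1 + ab.2) else (ab.1 + ab.2, ab.1)

theorem coeffAux_concat (l : List Bool) (prev : Bool) (ab : ℕ × ℕ) (p : Bool) :
    coeffAux prev ab (l ++ [p]) = coeffStep (p == l.getLastD prev) (coeffAux prev ab l) := by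
  induction l generalizing prev ab with
  | nil => by_cases h : p = prev <;> simp [coeffAux, coeffStep, h]
  | cons r l ih =>
    by_cases h : r = prev <;>
      simp only [List.cons_append, coeffAux, List.getLastD_cons, h, ih, if_true, if_false]

-- The default `true` is arbitrary: both branches of `coeffStep` send `(1, 0)` to `(1, 1)`.
theorem coeffPair_concat (l : List Bool) (p : Bool) :
    coeffPair (l ++ [p]) = coeffStep (p == l.getLastD true) (coeffPair l) := by
  cases l with
  | nil => cases p <;> rfl
  | cons q l =>
    simp only [List.cons_append, coeffPair, List.getLastD_cons]
    exact coeffAux_concat l q (1, 1) p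

theorem childPairs_pair (a b : ℕ) :
    childPairs {a, b} = {{a, a + b}, {b, a + b}} := by
  simp [childPairs]

theorem nodePair_concat (l : List Bool) :
    {nodePair (l ++ [true]), nodePair (l ++ [false])} = childPairs (nodePair l) := by
  simp only [nodePair, coeffPair_concat]
  rw [childPairs_pair]
  cases l.getLastD true
  · rw [Multiset.pair_comm]
    simp [coeffStep, add_comm]
  · simp [coeffStep, add_comm]

def adjPairs : List ℕ → Multiset (Multiset ℕ)
  | a :: b :: l => {a, b} ::ₘ adjPairs (b :: l)
  | _ => 0

theorem adjPairs_cons_insertSums (x a : ℕ) (l : List ℕ) :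
    adjPairs (x :: insertSums (a :: l)) = {x, a} ::ₘ adjPairs (insertSums (a :: l)) := by
  cases l <;> rfl

theorem adjPairs_insertSums (l : List ℕ) :
    adjPairs (insertSums l) = (adjPairs l).bind childPairs := by
  induction l with
  | nil => rfl
  | cons a l ih =>
    cases l with
    | nil => rfl
    | cons b l =>
      rw [insertSums, adjPairs, adjPairs_cons_insertSums, ih, adjPairs, Multiset.cons_bind,
        childPairs_pair, Multiset.pair_comm (a + b) b]
      simp only [Multiset.insert_eq_cons, Multiset.cons_add, Multiset.singleton_add]

theorem length_insertSums (l : List ℕ) : (insertSums l).length = 2 * l.length - 1 := by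
  induction l with
  | nil => rfl
  | cons a l ih =>
    cases l with
    | nil => rfl
    | cons b l => simp only [insertSums, List.length_cons] at ih ⊢; omega

theorem length_twigSeq (k : ℕ) : (twigSeq k).length = 2 ^ k + 1 := by
  induction k with
  | zero => rfl
  | succ k ih => rw [twigSeq, length_insertSums, ih, pow_succ]; omega

theorem adjPairs_eq_map_range (l : List ℕ) :
    adjPairs l = (Multiset.range (l.length - 1)).map fun i => {l[i]!, l[i + 1]!} := by
  induction l with
  | nil => rfl
  | cons a l ih =>
    cases l with
    | nil => rfl
    | cons b l =>
      rw [adjPairs, ih]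
      simp [Multiset.range, List.range_succ_eq_map, Function.comp_def]

def nodePairs (k : ℕ) : Multiset (Multiset ℕ) :=
  (Finset.univ : Finset (Fin k → Bool)).val.map fun f => nodePair (List.ofFn f)

theorem nodePairs_succ (k : ℕ) : nodePairs (k + 1) = (nodePairs k).bind childPairs := by
  rw [nodePairs, Finset.univ_val_map_pi_fin_succ, nodePairs, Multiset.bind_map]
  refine Multiset.bind_congr fun g _ => ?_
  simp only [List.ofFn_snoc, Fintype.univ_bool]
  exact nodePair_concat (List.ofFn g)

theorem nodePairs_eq_adjPairs_twigSeq (k : ℕ) : nodePairs k = adjPairs (twigSeq k) := by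
  induction k with
  | zero => rfl
  | succ k ih => rw [nodePairs_succ, ih, twigSeq, adjPairs_insertSums]

/-- The multiset of unordered pairs `{α, α+β}` over all `2^k` strings of length `k`
coincides with the multiset of unordered pairs of adjacent entries of the twig
multiplicity sequence `m_k`, one pair per node. -/
theorem coeffPairs_eq_adjacent_pairs (k : ℕ) :
    Multiset.map
      (fun f : Fin k → Bool =>
        ({(coeffPair (List.ofFn f)).1,
          (coeffPair (List.ofFn f)).1 + (coeffPair (List.ofFn f)).2} : Multiset ℕ))
      (Finset.univ : Finset (Fin k → Bool)).val =
    Multiset.map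
      (fun i => ({(twigSeq k)[i]!, (twigSeq k)[i + 1]!} : Multiset ℕ))
      (Multiset.range (2 ^ k)) := by
  have h := nodePairs_eq_adjPairs_twigSeq k
  rwa [adjPairs_eq_map_range, length_twigSeq, Nat.add_sub_cancel] at h
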